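/- Let A₀ be symmetric and A₁ positive definite n×n matrices. Every local minimizer of the Rayleigh quotient x ↦ (x^T A₀ x)/(x^T A₁ x) over nonzero x ∈ R^n is a global minimizer. -/

import Mathlib

open Matrix

/-- The quadratic form `xᵀ A x` on Euclidean space. -/
noncomputable def quadForm {n : ℕ} (A : Matrix (Fin n) (Fin n) ℝ)
    (x : EuclideanSpace ℝ (Fin n)) : ℝ :=
  ∑ i, ∑ j, A i j * x i * x j

/-!
If `x₀` is a local minimiser of `Q₀ / Q₁` with value `c`, then the quadratic form
`Q = Q₀ - c • Q₁` has a local minimum `Q x₀ = 0` at `x₀`. The parallelogram law gives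
`Q (x₀ + t • y) + Q (x₀ - t • y) = 2 t² Q y`, so a direction `y` with `Q y < 0` would make `Q`
negative arbitrarily close to `x₀`. Hence `Q ≥ 0`, i.e. `c ≤ Q₀ y / Q₁ y` for every `y ≠ 0`.
-/

open Filter Topology

namespace QuadraticMap

variable {R M N : Type*} [CommRing R] [AddCommGroup M] [Module R M] [AddCommGroup N] [Module R N]

theorem map_add_add_map_sub (Q : QuadraticMap R M N) (x y : M) :
    Q (x + y) + Q (x - y) = 2 • Q x + 2 • Q y := by
  have h := Q.polar_neg_right x y
  simp only [polar, Q.map_neg, ← sub_eq_add_neg, sub_sub, sub_eq_iff_eq_add] at h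
  rw [h, two_smul, two_smul]
  abel

variable {E : Type*} [AddCommGroup E] [Module ℝ E] [TopologicalSpace E] [IsTopologicalAddGroup E]
  [ContinuousSMul ℝ E]

theorem nonneg_of_isLocalMin_of_map_eq_zero (Q : QuadraticMap ℝ E ℝ) {x : E}
    (hmin : IsLocalMin Q x) (hx : Q x = 0) (y : E) : 0 ≤ Q y := by
  have hcont : Tendsto (fun t : ℝ => (x + t • y, x - t • y)) (𝓝[≠] 0) (𝓝 x ×ˢ 𝓝 x) := by
    rw [← nhds_prod_eq]
    exact tendsto_nhdsWithin_of_tendsto_nhds (Continuous.tendsto' (by fun_prop) _ _ (by simp))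
  obtain ⟨t, ⟨hplus, hminus⟩, ht⟩ :=
    ((hcont.eventually (hmin.prod_mk hmin)).and self_mem_nhdsWithin).exists
  have hsum := Q.map_add_add_map_sub x (t • y)
  rw [Q.map_smul] at hsum
  simp only [hx, smul_eq_mul, nsmul_eq_mul, Nat.cast_ofNat] at hsum hplus hminus
  exact nonneg_of_mul_nonneg_right (by linarith) (mul_self_pos.2 ht)

theorem isMinOn_div_of_isLocalMinOn (Q₀ Q₁ : QuadraticMap ℝ E ℝ) (hQ₁ : ∀ x ≠ 0, 0 < Q₁ x)
    {x₀ : E} (hmin : IsLocalMinOn (fun x => Q₀ x / Q₁ x) {0}ᶜ x₀) :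
    IsMinOn (fun x => Q₀ x / Q₁ x) {0}ᶜ x₀ := by
  set c := Q₀ x₀ / Q₁ x₀
  have hle_iff {x : E} (hx : x ≠ 0) : c ≤ Q₀ x / Q₁ x ↔ 0 ≤ (Q₀ - c • Q₁) x := by
    rw [le_div_iff₀ (hQ₁ x hx)]
    simp only [_root_.sub_apply, _root_.smul_apply, smul_eq_mul, sub_nonneg, mul_comm]
  have hx₀ : (Q₀ - c • Q₁) x₀ = 0 := by
    rcases eq_or_ne x₀ 0 with rfl | hne
    · exact map_zero _
    · simp only [_root_.sub_apply, _root_.smul_apply, smul_eq_mul, c,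
        div_mul_cancel₀ _ (hQ₁ x₀ hne).ne', sub_self]
  have hlocal : IsLocalMin (Q₀ - c • Q₁) x₀ := by
    filter_upwards [eventually_nhdsWithin_iff.mp hmin] with x hx
    rcases eq_or_ne x 0 with rfl | hne
    · simp [hx₀]
    · exact hx₀ ▸ (hle_iff hne).mp (hx hne)
  exact fun x hx =>
    (hle_iff hx).mpr ((Q₀ - c • Q₁).nonneg_of_isLocalMin_of_map_eq_zero hlocal hx₀ x)

end QuadraticMap

noncomputable def Matrix.euclideanQuadraticForm {n : ℕ} (A : Matrix (Fin n) (Fin n) ℝ) :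
    QuadraticForm ℝ (EuclideanSpace ℝ (Fin n)) :=
  A.toQuadraticForm'.comp (WithLp.linearEquiv 2 ℝ (Fin n → ℝ)).toLinearMap

theorem Matrix.euclideanQuadraticForm_apply {n : ℕ} (A : Matrix (Fin n) (Fin n) ℝ)
    (x : EuclideanSpace ℝ (Fin n)) : A.euclideanQuadraticForm x = quadForm A x := by
  simp only [euclideanQuadraticForm, Matrix.toQuadraticForm', QuadraticMap.comp_apply,
    LinearMap.BilinMap.toQuadraticMap_apply, Matrix.toLinearMap₂'_apply, quadForm, smul_eq_mul,
    LinearEquiv.coe_coe, WithLp.coe_linearEquiv]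
  exact Finset.sum_congr rfl fun i _ => Finset.sum_congr rfl fun j _ => by ring

theorem stmt7 {n : ℕ} (A₀ A₁ : Matrix (Fin n) (Fin n) ℝ)
    (hpd : ∀ x : EuclideanSpace ℝ (Fin n), x ≠ 0 → 0 < quadForm A₁ x)
    (xs : EuclideanSpace ℝ (Fin n))
    (hloc : ∃ ε > 0, ∀ x : EuclideanSpace ℝ (Fin n), x ≠ 0 → ‖x - xs‖ < ε →
      quadForm A₀ xs / quadForm A₁ xs ≤ quadForm A₀ x / quadForm A₁ x) :
    ∀ x : EuclideanSpace ℝ (Fin n), x ≠ 0 →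
      quadForm A₀ xs / quadForm A₁ xs ≤ quadForm A₀ x / quadForm A₁ x := by
  simp only [← Matrix.euclideanQuadraticForm_apply] at hpd hloc ⊢
  obtain ⟨ε, hε, hball⟩ := hloc
  have hmin : IsLocalMinOn (fun x => A₀.euclideanQuadraticForm x / A₁.euclideanQuadraticForm x)
      {0}ᶜ xs :=
    eventually_nhdsWithin_iff.mpr <| Metric.eventually_nhds_iff.mpr
      ⟨ε, hε, fun x hx hx0 => hball x hx0 (dist_eq_norm x xs ▸ hx)⟩
  exact fun x hx => QuadraticMap.isMinOn_div_of_isLocalMinOn _ _ hpd hmin hx
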